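/- Let a, b ∈ ℂ with Re(b − a) > 0 and let z ∈ ℂ with Im z < 0. Then the function V(a,b,z) = e^z U(b−a, b, −z) satisfies Kummer's equation with parameters (a,b): z V''(z) + (b − z) V'(z) − a V(z) = 0 (derivatives in z along the open lower half-plane). -/

import Mathlib

open Set

/-- The confluent hypergeometric function `U(α,b,ζ)`, defined for `Re α > 0` and
`−π < arg ζ < π` by `U(α,b,ζ) = ζ^{−α} (1/Γ(α)) ∫₀^∞ e^{−s} s^{α−1} (1 + s/ζ)^{b−α−1} ds`
(principal branches). -/
noncomputable def U (α b ζ : ℂ) : ℂ :=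
  ζ ^ (-α) *
    ((1 / Complex.Gamma α) *
      ∫ s in Set.Ioi (0 : ℝ),
        Complex.exp (-(s : ℂ)) * (s : ℂ) ^ (α - 1) * (1 + (s : ℂ) / ζ) ^ (b - α - 1))

/-- The second solution `V(a,b,z) = e^z U(b−a, b, −z)` of Kummer's equation. -/
noncomputable def V (a b z : ℂ) : ℂ := Complex.exp z * U (b - a) b (-z)

section Aux

open MeasureTheory Filter Complex

local notation "π" => Real.pi

noncomputable def Ig (β c z : ℂ) (s : ℝ) : ℂ :=
  Complex.exp (-(s : ℂ)) * (s : ℂ) ^ (β - 1) * ((s : ℂ) - z) ^ c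

noncomputable def Jg (β c z : ℂ) : ℂ := ∫ s in Set.Ioi (0 : ℝ), Ig β c z s

lemma norm_Ig {β c z : ℂ} {s : ℝ} (hs : 0 < s) :
    ‖Ig β c z s‖ = Real.exp (-s) * s ^ (β.re - 1) * ‖((s : ℂ) - z) ^ c‖ := by
  simp only [Ig, norm_mul]
  rw [Complex.norm_exp]
  rw [Complex.norm_cpow_eq_rpow_re_of_pos hs]
  norm_num

lemma norm_cpow_le {w : ℂ} (hw : w ≠ 0) (c : ℂ) :
    ‖w ^ c‖ ≤ ‖w‖ ^ c.re * Real.exp (Real.pi * |c.im|) := by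
  rw [Complex.norm_cpow_of_ne_zero hw]
  rw [div_eq_mul_inv, ← Real.exp_neg]
  refine mul_le_mul_of_nonneg_left (Real.exp_le_exp.2 ?_) (Real.rpow_nonneg (norm_nonneg _) _)
  calc -(w.arg * c.im) ≤ |w.arg * c.im| := neg_le_abs _
    _ = |w.arg| * |c.im| := abs_mul _ _
    _ ≤ Real.pi * |c.im| := by
        exact mul_le_mul_of_nonneg_right (Complex.abs_arg_le_pi w) (abs_nonneg _)

lemma rpow_sandwich {δ M w s r : ℝ} (hδ : 0 < δ) (hM : 0 ≤ M) (hs : 0 ≤ s)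
    (h1 : δ ≤ w) (h2 : w ≤ (1 + M) * (1 + s)) :
    w ^ r ≤ (δ ^ r + (1 + M) ^ |r|) * (1 + s) ^ |r| := by
  have hw : 0 < w := lt_of_lt_of_le hδ h1
  have hM1 : (1:ℝ) ≤ 1 + M := by linarith
  have hs1 : (1:ℝ) ≤ 1 + s := by linarith
  rcases le_or_gt 0 r with hr | hr
  · have habs : |r| = r := abs_of_nonneg hr
    rw [habs]
    calc w ^ r ≤ ((1+M)*(1+s)) ^ r := Real.rpow_le_rpow hw.le h2 hr
      _ = (1+M)^r * (1+s)^r := Real.mul_rpow (by linarith) (by linarith)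
      _ ≤ (δ ^ r + (1+M)^r) * (1+s)^r := by
          refine mul_le_mul_of_nonneg_right ?_ (Real.rpow_nonneg (by linarith) _)
          have := Real.rpow_nonneg hδ.le r
          linarith
  · calc w ^ r ≤ δ ^ r := Real.rpow_le_rpow_of_nonpos hδ h1 hr.le
      _ ≤ (δ ^ r + (1+M)^|r|) * 1 := by
          have := Real.rpow_nonneg (by linarith : (0:ℝ) ≤ 1 + M) |r|
          linarith
      _ ≤ (δ ^ r + (1+M)^|r|) * (1+s)^|r| := by
          refine mul_le_mul_of_nonneg_left ?_ ?_
          · exact Real.one_le_rpow hs1 (abs_nonneg _)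
          · have h3 := Real.rpow_nonneg hδ.le r
            have := Real.rpow_nonneg (by linarith : (0:ℝ) ≤ 1+M) |r|
            linarith

lemma integrable_aux (p N : ℝ) (hp : 0 < p) (hN : 0 ≤ N) :
    IntegrableOn (fun s : ℝ => Real.exp (-s) * s ^ (p - 1) * (1 + s) ^ N) (Set.Ioi 0) := by
  have hint : IntegrableOn (fun s : ℝ =>
      2 ^ N * (Real.exp (-s) * s ^ (p-1)) + 2 ^ N * (Real.exp (-s) * s ^ (p+N-1)))
      (Set.Ioi 0) := by
    exact ((Real.GammaIntegral_convergent hp).const_mul _).add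
      ((Real.GammaIntegral_convergent (show (0:ℝ) < p + N by linarith)).const_mul _)
  refine hint.mono' ?_ ?_
  · apply ContinuousOn.aestronglyMeasurable ?_ measurableSet_Ioi
    apply ContinuousOn.mul
    apply ContinuousOn.mul
    · exact (Real.continuous_exp.comp continuous_neg).continuousOn
    · exact fun s hs => (Real.continuousAt_rpow_const s _ (Or.inl (ne_of_gt hs))).continuousWithinAt
    · exact ContinuousOn.rpow_const ((continuous_const.add continuous_id).continuousOn)
        (fun x hx => Or.inl (by simp at hx; positivity))
  · rw [ae_restrict_iff' measurableSet_Ioi]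
    refine ae_of_all _ fun s hs => ?_
    have hs : 0 < s := hs
    have h1 : (1 + s) ^ N ≤ 2 ^ N * (1 + s ^ N) := by
      rcases le_or_gt s 1 with h | h
      · calc (1+s)^N ≤ 2 ^ N := Real.rpow_le_rpow (by linarith) (by linarith) hN
          _ ≤ 2 ^ N * (1 + s ^ N) := by
            nlinarith [Real.rpow_nonneg hs.le N, Real.rpow_nonneg (by norm_num : (0:ℝ) ≤ 2) N]
      · calc (1+s)^N ≤ (2*s) ^ N := Real.rpow_le_rpow (by linarith) (by linarith) hN
          _ = 2 ^ N * s ^ N := Real.mul_rpow (by norm_num) hs.le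
          _ ≤ 2 ^ N * (1 + s ^ N) := by
            nlinarith [Real.rpow_nonneg (by norm_num : (0:ℝ) ≤ 2) N]
    have hnn : 0 ≤ Real.exp (-s) * s ^ (p-1) := by positivity
    rw [Real.norm_eq_abs, _root_.abs_of_nonneg (by positivity)]
    calc Real.exp (-s) * s^(p-1) * (1+s)^N ≤ Real.exp (-s) * s^(p-1) * (2^N * (1+s^N)) :=
        mul_le_mul_of_nonneg_left h1 hnn
      _ = 2^N * (Real.exp (-s) * s^(p-1)) + 2^N * (Real.exp (-s) * (s^(p-1)*s^N)) := by ring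
      _ = _ := by rw [← Real.rpow_add hs]; ring_nf


lemma key_bound {δ M : ℝ} (hδ : 0 < δ) (hM : 0 ≤ M) (β c z : ℂ)
    (hz : z.im ≤ -δ) (hzM : ‖z‖ ≤ M) {s : ℝ} (hs : 0 < s) :
    ‖Ig β c z s‖ ≤ (δ ^ c.re + (1 + M) ^ |c.re|) * Real.exp (Real.pi * |c.im|) *
      (Real.exp (-s) * s ^ (β.re - 1) * (1 + s) ^ |c.re|) := by
  have him : δ ≤ ((s : ℂ) - z).im := by
    simp only [Complex.sub_im, Complex.ofReal_im, zero_sub]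
    linarith
  have hw0 : ((s : ℂ) - z) ≠ 0 := by
    intro h
    rw [h] at him; simp at him; linarith
  have h1 : δ ≤ ‖(s:ℂ) - z‖ := le_trans him
    (le_trans (le_abs_self _) (Complex.abs_im_le_norm _))
  have h2 : ‖(s:ℂ) - z‖ ≤ (1 + M) * (1 + s) := by
    calc ‖(s:ℂ) - z‖ ≤ ‖(s:ℂ)‖ + ‖z‖ := by simpa [sub_eq_add_neg] using norm_add_le (s:ℂ) (-z)
      _ ≤ s + M := by rw [Complex.norm_real, Real.norm_eq_abs, _root_.abs_of_nonneg hs.le]; linarith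
      _ ≤ (1 + M) * (1 + s) := by nlinarith
  rw [norm_Ig hs]
  have h3 : ‖((s:ℂ) - z) ^ c‖ ≤ ((δ ^ c.re + (1 + M) ^ |c.re|) * (1 + s) ^ |c.re|) *
      Real.exp (Real.pi * |c.im|) := by
    refine le_trans (norm_cpow_le hw0 c) ?_
    exact mul_le_mul_of_nonneg_right (rpow_sandwich hδ hM hs.le h1 h2) (Real.exp_pos _).le
  calc Real.exp (-s) * s ^ (β.re - 1) * ‖((s:ℂ) - z) ^ c‖
      ≤ Real.exp (-s) * s ^ (β.re - 1) * (((δ ^ c.re + (1 + M) ^ |c.re|) * (1 + s) ^ |c.re|) *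
        Real.exp (Real.pi * |c.im|)) := by
        exact mul_le_mul_of_nonneg_left h3 (by positivity)
    _ = _ := by ring

lemma aesm_Ig (β c z : ℂ) (hz : z.im < 0) :
    AEStronglyMeasurable (Ig β c z) (volume.restrict (Set.Ioi 0)) := by
  apply ContinuousOn.aestronglyMeasurable ?_ measurableSet_Ioi
  apply ContinuousOn.mul
  apply ContinuousOn.mul
  · exact (Complex.continuous_exp.comp (continuous_ofReal.neg)).continuousOn
  · intro s hs
    have hs' : (0:ℝ) < s := hs
    exact ((continuousAt_cpow_const (Or.inl (by simpa using hs'))).comp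
      continuous_ofReal.continuousAt).continuousWithinAt
  · intro s hs
    have : ((s:ℂ) - z) ∈ Complex.slitPlane := Or.inr (by
      simp only [Complex.sub_im, Complex.ofReal_im, zero_sub]; exact ne_of_gt (by linarith))
    have hc : ContinuousAt (fun s : ℝ => ((s:ℂ) - z)) s :=
      (continuous_ofReal.sub continuous_const).continuousAt
    exact (ContinuousAt.comp (x := s) (continuousAt_cpow_const this) hc).continuousWithinAt

lemma integrable_Ig (β c z : ℂ) (hβ : 0 < β.re) (hz : z.im < 0) :
    IntegrableOn (Ig β c z) (Set.Ioi 0) := by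
  set δ := -z.im with hδdef
  have hδ : 0 < δ := by simp [hδdef]; linarith
  set M := ‖z‖ with hMdef
  have hM : 0 ≤ M := norm_nonneg z
  refine ((integrable_aux β.re |c.re| hβ (abs_nonneg _)).const_mul
    ((δ ^ c.re + (1 + M) ^ |c.re|) * Real.exp (Real.pi * |c.im|))).mono'
    (aesm_Ig β c z hz) ?_
  rw [ae_restrict_iff' measurableSet_Ioi]
  refine ae_of_all _ fun s hs => ?_
  have := key_bound hδ hM β c z (by linarith) le_rfl (hs : 0 < s)
  calc ‖Ig β c z s‖ ≤ _ := this
    _ = _ := by ring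


lemma hasDerivAt_Ig {β c z : ℂ} {s : ℝ} (hs : 0 < s) (hz : z.im < 0) :
    HasDerivAt (fun z => Ig β c z s) (-c * Ig β (c-1) z s) z := by
  have hsp : ((s:ℂ) - z) ∈ Complex.slitPlane := Or.inr (by
    simp only [Complex.sub_im, Complex.ofReal_im, zero_sub]
    exact ne_of_gt (by linarith))
  have h1 : HasDerivAt (fun z : ℂ => (s:ℂ) - z) (0 - 1) z :=
    (hasDerivAt_const z (s:ℂ)).sub (hasDerivAt_id z)
  have h2 := h1.cpow_const (c := c) hsp
  have h3 := h2.const_mul (Complex.exp (-(s:ℂ)) * (s:ℂ) ^ (β - 1))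
  refine h3.congr_deriv ?_
  simp only [Ig]
  ring

lemma hasDerivAt_Jg (β c : ℂ) (hβ : 0 < β.re) {z₀ : ℂ} (hz : z₀.im < 0) :
    HasDerivAt (Jg β c) (-c * Jg β (c-1) z₀) z₀ := by
  set δ := -z₀.im / 2 with hδdef
  have hδ : 0 < δ := by simp [hδdef]; linarith
  set M := ‖z₀‖ + δ with hMdef
  have hM : 0 ≤ M := by positivity
  have hball : ∀ z ∈ Metric.ball z₀ δ, z.im ≤ -δ ∧ ‖z‖ ≤ M := by
    intro z hzb
    rw [Metric.mem_ball, Complex.dist_eq] at hzb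
    constructor
    · have : |z.im - z₀.im| ≤ ‖z - z₀‖ := by
        simpa using Complex.abs_im_le_norm (z - z₀)
      have h2 := abs_le.1 (le_trans this hzb.le)
      have : z.im ≤ z₀.im + δ := by linarith [h2.2]
      rw [hδdef] at *; linarith
    · have h4 : ‖z‖ ≤ ‖z - z₀‖ + ‖z₀‖ := by
        simpa using norm_add_le (z - z₀) z₀
      rw [hMdef]; linarith
  have him : ∀ z ∈ Metric.ball z₀ δ, z.im < 0 := fun z hzb => lt_of_le_of_lt
    ((hball z hzb).1) (by linarith)
  set bnd : ℝ → ℝ := fun s => ‖c‖ * ((δ ^ (c-1).re + (1 + M) ^ |(c-1).re|) *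
    Real.exp (Real.pi * |(c-1).im|) * (Real.exp (-s) * s ^ (β.re - 1) * (1 + s) ^ |(c-1).re|))
  have key := hasDerivAt_integral_of_dominated_loc_of_deriv_le (μ := volume.restrict (Ioi 0))
    (F := fun z s => Ig β c z s) (F' := fun z s => -c * Ig β (c-1) z s)
    (x₀ := z₀) (bound := bnd) (Metric.ball_mem_nhds z₀ hδ)
    ?_ ?_ ?_ ?_ ?_ ?_
  · refine key.2.congr_deriv ?_
    rw [integral_const_mul]
    rfl
  · filter_upwards [IsOpen.mem_nhds (isOpen_lt Complex.continuous_im continuous_const :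
      IsOpen {w : ℂ | w.im < 0}) hz] with z hzlt
    exact aesm_Ig β c z hzlt
  · exact integrable_Ig β c z₀ hβ hz
  · exact (aesm_Ig β (c-1) z₀ hz).const_mul _
  · rw [ae_restrict_iff' measurableSet_Ioi]
    refine ae_of_all _ fun s hs z hzb => ?_
    rw [norm_mul, norm_neg]
    have := key_bound hδ hM β (c-1) z (hball z hzb).1 (hball z hzb).2 (hs : 0 < s)
    exact mul_le_mul_of_nonneg_left this (norm_nonneg c)
  · exact (integrable_aux β.re |(c-1).re| hβ (abs_nonneg _)).const_mul _ |>.const_mul _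
  · rw [ae_restrict_iff' measurableSet_Ioi]
    exact ae_of_all _ fun s hs z hzb => hasDerivAt_Ig hs (him z hzb)


lemma mul_cpow_im {x y : ℂ} (hx : 0 < x.im) (hy : y.im < 0) (e : ℂ) :
    (x * y) ^ e = x ^ e * y ^ e := by
  have hx0 : x ≠ 0 := fun h => by simp [h] at hx
  have hy0 : y ≠ 0 := fun h => by simp [h] at hy
  have hxy : x * y ≠ 0 := mul_ne_zero hx0 hy0
  have h1 : 0 < x.arg := by
    rcases lt_or_eq_of_le (Complex.arg_nonneg_iff.2 hx.le) with h | h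
    · exact h
    · exfalso
      have := (Complex.arg_eq_zero_iff.1 h.symm).2
      linarith
  have h2 : x.arg < π := by
    rcases lt_or_eq_of_le (Complex.arg_le_pi x) with h | h
    · exact h
    · exfalso
      have := (Complex.arg_eq_pi_iff.1 h).2
      linarith
  have h3 : y.arg < 0 := Complex.arg_neg_iff.2 hy
  have h4 : -π < y.arg := Complex.neg_pi_lt_arg y
  have harg : x.arg + y.arg ∈ Set.Ioc (-π) π := ⟨by linarith, by linarith⟩
  rw [Complex.cpow_def_of_ne_zero hxy, Complex.cpow_def_of_ne_zero hx0,
    Complex.cpow_def_of_ne_zero hy0, Complex.log_mul hx0 hy0 harg, add_mul, Complex.exp_add]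

lemma V_eq_Jg (a b : ℂ) {z : ℂ} (hz : z.im < 0) :
    V a b z = (1 / Complex.Gamma (b - a)) *
      (Complex.exp z * (-z) ^ (1 - b) * Jg (b - a) (a - 1) z) := by
  have hζim : 0 < (-z).im := by simp; linarith
  have hζ0 : (-z) ≠ 0 := fun h => by simp [h] at hζim
  rw [V, U, show b - (b - a) - 1 = a - 1 by ring]
  have key : (-z) ^ (-(b-a)) * (∫ s in Set.Ioi (0:ℝ),
        Complex.exp (-(s:ℂ)) * (s:ℂ) ^ (b - a - 1) * (1 + (s:ℂ) / (-z)) ^ (a - 1))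
      = (-z) ^ (1 - b) * Jg (b - a) (a - 1) z := by
    rw [Jg, ← integral_const_mul, ← integral_const_mul]
    refine setIntegral_congr_fun measurableSet_Ioi fun s hs => ?_
    have hs' : (0:ℝ) < s := hs
    have hqim : (1 + (s:ℂ) / (-z)).im < 0 := by
      have h5 : ((s:ℂ) / (-z)).im = -(s * (-z).im) / Complex.normSq (-z) := by
        rw [Complex.div_im]
        simp [Complex.normSq]
        ring
      have h6 : 0 < Complex.normSq (-z) := Complex.normSq_pos.2 hζ0
      simp only [Complex.add_im, Complex.one_im, zero_add, h5]
      apply div_neg_of_neg_of_pos _ h6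
      simp only [neg_neg, neg_lt_zero]
      positivity
    have hz0 : z ≠ 0 := fun h => by simp [h] at hz
    have hq : ((s:ℂ) - z) = (-z) * (1 + (s:ℂ) / (-z)) := by
      field_simp
      ring
    have hmul := mul_cpow_im hζim hqim (a - 1)
    rw [← hq] at hmul
    have hpow : (-z) ^ (-(b-a)) = (-z) ^ (1-b) * (-z) ^ (a-1) := by
      rw [← Complex.cpow_add _ _ hζ0]
      congr 1
      ring
    simp only [Ig]
    rw [hmul, hpow]
    ring
  linear_combination Complex.exp z * (1 / Complex.Gamma (b - a)) * key


lemma star_integral (a b z : ℂ) (hba : 0 < (b - a).re) (hz : z.im < 0) :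
    (1 - a) * Jg (b - a) (a - 1) z + (a - 1) * (b - 2 - z) * Jg (b - a) (a - 2) z
      + (a - 1) * (a - 2) * z * Jg (b - a) (a - 3) z = 0 := by
  have hz0 : z ≠ 0 := fun h => by simp [h] at hz
  set R : ℝ → ℂ := fun s => Complex.exp (-(s:ℂ)) * (s:ℂ) ^ (b - a) * ((s:ℂ) - z) ^ (a - 2)
    with hRdef
  set T : ℝ → ℂ := fun s =>
    (Complex.exp (-(s:ℂ)) * (-1) * (s:ℂ) ^ (b - a) +
      Complex.exp (-(s:ℂ)) * ((b - a) * (s:ℂ) ^ (b - a - 1))) * ((s:ℂ) - z) ^ (a - 2) +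
    Complex.exp (-(s:ℂ)) * (s:ℂ) ^ (b - a) * ((a - 2) * ((s:ℂ) - z) ^ (a - 3) * 1) with hTdef
  -- derivative of R is T on Ioi 0
  have hR : ∀ s ∈ Set.Ioi (0:ℝ), HasDerivAt R (T s) s := by
    intro s hs
    have hs' : (0:ℝ) < s := hs
    have hsl : ((s:ℂ) - z) ∈ Complex.slitPlane := Or.inr (by
      simp only [Complex.sub_im, Complex.ofReal_im, zero_sub]
      exact ne_of_gt (by linarith))
    have hf : HasDerivAt (fun s : ℝ => Complex.exp (-(s:ℂ)))
        (Complex.exp (-(s:ℂ)) * (-1)) s := by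
      have : HasDerivAt (fun w : ℂ => Complex.exp (-w)) (Complex.exp (-(s:ℂ)) * (-1)) (s:ℂ) := by
        exact (hasDerivAt_neg (s:ℂ)).cexp
      exact this.comp_ofReal
    have hg : HasDerivAt (fun s : ℝ => (s:ℂ) ^ (b - a)) ((b - a) * (s:ℂ) ^ (b - a - 1)) s := by
      have : HasDerivAt (fun w : ℂ => w ^ (b - a)) ((b - a) * (s:ℂ) ^ (b - a - 1)) (s:ℂ) :=
        (Complex.hasStrictDerivAt_cpow_const (Or.inl (by simpa using hs'))).hasDerivAt
      exact this.comp_ofReal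
    have hh : HasDerivAt (fun s : ℝ => ((s:ℂ) - z) ^ (a - 2))
        ((a - 2) * ((s:ℂ) - z) ^ (a - 3) * 1) s := by
      have : HasDerivAt (fun w : ℂ => (w - z) ^ (a - 2))
          ((a - 2) * ((s:ℂ) - z) ^ (a - 2 - 1) * 1) (s:ℂ) :=
        ((hasDerivAt_id (s:ℂ)).sub_const z).cpow_const hsl
      rw [show a - 2 - 1 = a - 3 by ring] at this
      exact this.comp_ofReal
    exact (hf.mul hg).mul hh
  -- T is integrable
  have hTeq : Set.EqOn (fun s => (-1 : ℂ) * Ig (b - a + 1) (a - 2) z s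
      + (b - a) * Ig (b - a) (a - 2) z s + (a - 2) * Ig (b - a + 1) (a - 3) z s) T
      (Set.Ioi 0) := by
    intro s hs
    have hs' : (0:ℝ) < s := hs
    simp only [Ig, hTdef, show b - a + 1 - 1 = b - a by ring]
    ring
  have hT_int : IntegrableOn T (Set.Ioi 0) := by
    have h1 : (0:ℝ) < (b - a + 1).re := by
      rw [Complex.add_re, Complex.one_re]; linarith
    have i0 : IntegrableOn (fun s => (-1 : ℂ) * Ig (b - a + 1) (a - 2) z s
        + (b - a) * Ig (b - a) (a - 2) z s + (a - 2) * Ig (b - a + 1) (a - 3) z s)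
        (Set.Ioi 0) := by
      exact (((integrable_Ig _ _ z h1 hz).const_mul _).add
        ((integrable_Ig _ _ z hba hz).const_mul _)).add
        ((integrable_Ig _ _ z h1 hz).const_mul _)
    exact i0.congr_fun hTeq measurableSet_Ioi
  -- bound for |R s|
  set δ := -z.im with hδdef
  have hδ : 0 < δ := by simp [hδdef]; linarith
  set M := ‖z‖ with hMdef
  have hM : 0 ≤ M := norm_nonneg z
  set r := (a - 2).re with hrdef
  set C₀ : ℝ := (δ ^ r + (1 + M) ^ |r|) * Real.exp (Real.pi * |(a - 2).im|) with hC₀def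
  have hC₀ : 0 ≤ C₀ := by positivity
  have hRbound : ∀ s : ℝ, 0 < s →
      ‖R s‖ ≤ Real.exp (-s) * s ^ (b - a).re * (C₀ * (1 + s) ^ |r|) := by
    intro s hs
    have him : δ ≤ ((s : ℂ) - z).im := by
      simp only [Complex.sub_im, Complex.ofReal_im, zero_sub]; linarith
    have hw0 : ((s : ℂ) - z) ≠ 0 := by
      intro h; rw [h] at him; simp at him; linarith
    have h1 : δ ≤ ‖(s:ℂ) - z‖ := le_trans him
      (le_trans (le_abs_self _) (Complex.abs_im_le_norm _))
    have h2 : ‖(s:ℂ) - z‖ ≤ (1 + M) * (1 + s) := by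
      have h4 : ‖(s:ℂ) - z‖ ≤ ‖(s:ℂ)‖ + ‖z‖ := by
        simpa [sub_eq_add_neg] using norm_add_le (s:ℂ) (-z)
      rw [Complex.norm_real, Real.norm_eq_abs, _root_.abs_of_nonneg hs.le] at h4
      nlinarith
    have h3 : ‖((s:ℂ) - z) ^ (a - 2)‖ ≤ C₀ * (1 + s) ^ |r| := by
      refine le_trans (norm_cpow_le hw0 (a - 2)) ?_
      calc ‖(s:ℂ) - z‖ ^ r * Real.exp (Real.pi * |(a-2).im|)
          ≤ ((δ ^ r + (1 + M) ^ |r|) * (1 + s) ^ |r|) * Real.exp (Real.pi * |(a-2).im|) :=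
            mul_le_mul_of_nonneg_right (rpow_sandwich hδ hM hs.le h1 h2) (Real.exp_pos _).le
        _ = C₀ * (1 + s) ^ |r| := by rw [hC₀def]; ring
    have hnorm : ‖R s‖ = Real.exp (-s) * s ^ (b - a).re * ‖((s:ℂ) - z) ^ (a - 2)‖ := by
      simp only [hRdef, norm_mul]
      rw [Complex.norm_exp, Complex.norm_cpow_eq_rpow_re_of_pos hs]
      norm_num
    rw [hnorm]
    exact mul_le_mul_of_nonneg_left h3 (by positivity)
  -- continuity at 0 within Ici 0
  have hba0 : (b - a) ≠ (0:ℂ) := fun h => by rw [h] at hba; simp at hba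
  have hR0 : R 0 = 0 := by
    have h0 : ((0:ℝ):ℂ) ^ (b - a) = 0 := by
      rw [Complex.ofReal_zero, Complex.zero_cpow hba0]
    simp only [hRdef, h0, mul_zero, zero_mul]
  have hcont : ContinuousWithinAt R (Set.Ici 0) 0 := by
    rw [ContinuousWithinAt, hR0]
    apply squeeze_zero_norm' (a := fun s : ℝ => (C₀ * 2 ^ |r|) * s ^ (b - a).re)
    · filter_upwards [inter_mem_nhdsWithin (Set.Ici 0) (Iio_mem_nhds one_pos :
        Set.Iio (1:ℝ) ∈ nhds 0)] with s hs
      rcases eq_or_lt_of_le (Set.mem_Ici.1 hs.1 : (0:ℝ) ≤ s) with h | h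
      · rw [← h, hR0]
        simp only [norm_zero]
        positivity
      · refine le_trans (hRbound s h) ?_
        have e1 : Real.exp (-s) ≤ 1 := by
          rw [Real.exp_le_one_iff]; linarith
        have hs2 : s < 1 := hs.2
        have e2 : (1 + s) ^ |r| ≤ 2 ^ |r| :=
          Real.rpow_le_rpow (by linarith) (by linarith) (abs_nonneg _)
        have e3 : (0:ℝ) ≤ s ^ (b - a).re := Real.rpow_nonneg h.le _
        calc Real.exp (-s) * s ^ (b-a).re * (C₀ * (1+s)^|r|)
            ≤ 1 * s ^ (b-a).re * (C₀ * 2^|r|) := by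
              refine mul_le_mul (mul_le_mul_of_nonneg_right e1 e3) ?_ (by positivity) ?_
              · exact mul_le_mul_of_nonneg_left e2 hC₀
              · positivity
          _ = (C₀ * 2^|r|) * s ^ (b-a).re := by ring
    · have h5 : Filter.Tendsto (fun s : ℝ => s ^ (b - a).re) (nhdsWithin 0 (Set.Ici 0))
          (nhds 0) := by
        have h6 : ContinuousWithinAt (fun s : ℝ => s ^ (b - a).re) (Set.Ici 0) 0 :=
          (Real.continuousAt_rpow_const 0 ((b-a).re) (Or.inr hba.le)).continuousWithinAt
        rwa [ContinuousWithinAt, Real.zero_rpow (ne_of_gt hba)] at h6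
      have := h5.const_mul (C₀ * 2 ^ |r|)
      simpa using this
  -- limit at infinity
  have hlim : Filter.Tendsto R Filter.atTop (nhds 0) := by
    apply squeeze_zero_norm' (a := fun s : ℝ => (C₀ * 2 ^ |r|) *
      (s ^ ((b - a).re + |r|) * Real.exp (-s)))
    · filter_upwards [Filter.eventually_ge_atTop (1:ℝ)] with s hs
      have hs0 : (0:ℝ) < s := by linarith
      refine le_trans (hRbound s hs0) ?_
      have e2 : (1 + s) ^ |r| ≤ 2 ^ |r| * s ^ |r| := by
        calc (1+s)^|r| ≤ (2*s) ^ |r| := Real.rpow_le_rpow (by linarith) (by linarith) (abs_nonneg _)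
          _ = 2^|r| * s^|r| := Real.mul_rpow (by norm_num) hs0.le
      calc Real.exp (-s) * s ^ (b-a).re * (C₀ * (1+s)^|r|)
          ≤ Real.exp (-s) * s ^ (b-a).re * (C₀ * (2^|r| * s^|r|)) := by
            refine mul_le_mul_of_nonneg_left (mul_le_mul_of_nonneg_left e2 hC₀) (by positivity)
        _ = (C₀ * 2^|r|) * ((s ^ (b-a).re * s ^ |r|) * Real.exp (-s)) := by ring
        _ = (C₀ * 2^|r|) * (s ^ ((b-a).re + |r|) * Real.exp (-s)) := by
            rw [← Real.rpow_add hs0]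
    · have h6 := tendsto_rpow_mul_exp_neg_mul_atTop_nhds_zero ((b-a).re + |r|) 1 one_pos
      simp only [neg_mul, one_mul] at h6
      have := h6.const_mul (C₀ * 2 ^ |r|)
      simpa using this
  -- FTC
  have hFTC : ∫ s in Set.Ioi (0:ℝ), T s = 0 - R 0 :=
    integral_Ioi_of_hasDerivAt_of_tendsto hcont hR hT_int hlim
  rw [hR0, sub_zero] at hFTC
  -- pointwise identity: combo = (a-1) * T
  have hcombo : Set.EqOn (fun s => (1 - a) * Ig (b - a) (a - 1) z s
      + (a - 1) * (b - 2 - z) * Ig (b - a) (a - 2) z s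
      + (a - 1) * (a - 2) * z * Ig (b - a) (a - 3) z s)
      (fun s => (a - 1) * T s) (Set.Ioi 0) := by
    intro s hs
    have hs' : (0:ℝ) < s := hs
    have hs0 : ((s:ℝ):ℂ) ≠ 0 := by
      simp only [ne_eq, Complex.ofReal_eq_zero]; linarith
    have him : 0 < ((s : ℂ) - z).im := by
      simp only [Complex.sub_im, Complex.ofReal_im, zero_sub]; linarith
    have hw0 : ((s : ℂ) - z) ≠ 0 := fun h => by rw [h] at him; simp at him
    simp only [Ig, hTdef]
    rw [show (b - a : ℂ) = (b - a - 1) + 1 by ring, Complex.cpow_add _ _ hs0, Complex.cpow_one,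
      show (a - 1 : ℂ) = (a - 3) + 2 by ring, Complex.cpow_add _ _ hw0,
      show (a - 2 : ℂ) = (a - 3) + 1 by ring, Complex.cpow_add _ _ hw0, Complex.cpow_one,
      show ((2:ℂ)) = ((2:ℕ):ℂ) by norm_num, Complex.cpow_natCast]
    push_cast
    ring_nf
  -- assemble
  have h1 : (0:ℝ) < (b - a).re := hba
  have e1 := integrable_Ig (b-a) (a-1) z h1 hz
  have e2 := integrable_Ig (b-a) (a-2) z h1 hz
  have e3 := integrable_Ig (b-a) (a-3) z h1 hz
  have i1 : Integrable (fun s : ℝ => (1 - a) * Ig (b - a) (a - 1) z s)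
      (volume.restrict (Set.Ioi 0)) := e1.const_mul _
  have i2 : Integrable (fun s : ℝ => (a - 1) * (b - 2 - z) * Ig (b - a) (a - 2) z s)
      (volume.restrict (Set.Ioi 0)) := e2.const_mul _
  have i3 : Integrable (fun s : ℝ => (a - 1) * (a - 2) * z * Ig (b - a) (a - 3) z s)
      (volume.restrict (Set.Ioi 0)) := e3.const_mul _
  have i12 : Integrable (fun s : ℝ => (1 - a) * Ig (b - a) (a - 1) z s
      + (a - 1) * (b - 2 - z) * Ig (b - a) (a - 2) z s) (volume.restrict (Set.Ioi 0)) :=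
    i1.add i2
  have step : (1 - a) * Jg (b - a) (a - 1) z + (a - 1) * (b - 2 - z) * Jg (b - a) (a - 2) z
      + (a - 1) * (a - 2) * z * Jg (b - a) (a - 3) z
      = ∫ s in Set.Ioi (0:ℝ), ((1 - a) * Ig (b - a) (a - 1) z s
        + (a - 1) * (b - 2 - z) * Ig (b - a) (a - 2) z s
        + (a - 1) * (a - 2) * z * Ig (b - a) (a - 3) z s) := by
    rw [Jg, Jg, Jg, ← integral_const_mul, ← integral_const_mul, ← integral_const_mul,
      ← integral_add i1 i2, ← integral_add i12 i3]
  rw [step, setIntegral_congr_fun measurableSet_Ioi hcombo, integral_const_mul, hFTC, mul_zero]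


noncomputable def Pf (a b d c z : ℂ) : ℂ := Complex.exp z * (-z) ^ d * Jg (b - a) c z

lemma hasDerivAt_Pf (a b d c : ℂ) (hba : 0 < (b - a).re) {z : ℂ} (hz : z.im < 0) :
    HasDerivAt (Pf a b d c)
      (Pf a b d c z - d * Pf a b (d - 1) c z - c * Pf a b d (c - 1) z) z := by
  have hsl : (-z) ∈ Complex.slitPlane := Or.inr (by simp; linarith)
  have h1 : HasDerivAt (fun w : ℂ => -w) (-1) z := (hasDerivAt_id z).neg
  have h2 := h1.cpow_const (c := d) hsl
  have h3 := Complex.hasDerivAt_exp z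
  have h4 := hasDerivAt_Jg (b - a) c hba hz
  have h5 := (h3.mul h2).mul h4
  refine h5.congr_deriv ?_
  simp only [Pf, Pi.mul_apply]
  ring

lemma Pf_rel (a b d c : ℂ) {z : ℂ} (hz : z.im < 0) :
    z * Pf a b (d - 1) c z = -(Pf a b d c z) := by
  have hz0 : (-z) ≠ 0 := fun h => by
    have : z.im = 0 := by simpa using congrArg Complex.im h
    linarith
  have e := Complex.cpow_add (x := -z) (d - 1) 1 hz0
  rw [sub_add_cancel, Complex.cpow_one] at e
  simp only [Pf, e]
  ring


end Aux

open MeasureTheory Filter Complex in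
/-- For `Re(b − a) > 0` and `Im z < 0`, the function `V(a,b,·)` satisfies Kummer's
equation with parameters `(a,b)`: `z V'' + (b − z) V' − a V = 0`. -/
theorem V_satisfies_kummer (a b : ℂ) (hba : 0 < (b - a).re) (z : ℂ) (hz : z.im < 0) :
    DifferentiableAt ℂ (V a b) z ∧ DifferentiableAt ℂ (deriv (V a b)) z ∧
      z * deriv (deriv (V a b)) z + (b - z) * deriv (V a b) z - a * V a b z = 0 := by
  set g : ℂ := 1 / Complex.Gamma (b - a) with hgdef
  set W : ℂ → ℂ := fun w => g * Pf a b (1 - b) (a - 1) w with hWdef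
  have hopen : IsOpen {w : ℂ | w.im < 0} := isOpen_lt Complex.continuous_im continuous_const
  have hVW : ∀ w ∈ {w : ℂ | w.im < 0}, V a b w = W w := by
    intro w hw
    rw [V_eq_Jg a b hw]
    simp only [hWdef, Pf, hgdef]
  have hVWev : ∀ {w : ℂ}, w.im < 0 → V a b =ᶠ[nhds w] W := fun {w} hw =>
    Filter.eventually_of_mem (hopen.mem_nhds hw) hVW
  set D1 : ℂ → ℂ := fun w => g * (Pf a b (1 - b) (a - 1) w
    - (1 - b) * Pf a b (-b) (a - 1) w - (a - 1) * Pf a b (1 - b) (a - 2) w) with hD1def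
  have hD1 : ∀ {w : ℂ}, w.im < 0 → HasDerivAt W (D1 w) w := by
    intro w hw
    have h := hasDerivAt_Pf a b (1 - b) (a - 1) hba hw
    rw [show (1 - b - 1 : ℂ) = -b by ring, show (a - 1 - 1 : ℂ) = a - 2 by ring] at h
    exact h.const_mul g
  have hderivV : ∀ {w : ℂ}, w.im < 0 → deriv (V a b) w = D1 w := fun {w} hw => by
    rw [(hVWev hw).deriv_eq]
    exact (hD1 hw).deriv
  have hdiffV : DifferentiableAt ℂ (V a b) z :=
    (Filter.EventuallyEq.differentiableAt_iff (hVWev hz)).2 (hD1 hz).differentiableAt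
  -- second derivative
  have hA := hasDerivAt_Pf a b (1 - b) (a - 1) hba hz
  rw [show (1 - b - 1 : ℂ) = -b by ring, show (a - 1 - 1 : ℂ) = a - 2 by ring] at hA
  have hB := hasDerivAt_Pf a b (-b) (a - 1) hba hz
  rw [show (a - 1 - 1 : ℂ) = a - 2 by ring] at hB
  have hC := hasDerivAt_Pf a b (1 - b) (a - 2) hba hz
  rw [show (1 - b - 1 : ℂ) = -b by ring, show (a - 2 - 1 : ℂ) = a - 3 by ring] at hC
  have hD2 : HasDerivAt D1
      (g * ((Pf a b (1 - b) (a - 1) z - (1 - b) * Pf a b (-b) (a - 1) z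
          - (a - 1) * Pf a b (1 - b) (a - 2) z)
        - (1 - b) * (Pf a b (-b) (a - 1) z - (-b) * Pf a b (-b - 1) (a - 1) z
          - (a - 1) * Pf a b (-b) (a - 2) z)
        - (a - 1) * (Pf a b (1 - b) (a - 2) z - (1 - b) * Pf a b (-b) (a - 2) z
          - (a - 2) * Pf a b (1 - b) (a - 3) z))) z := by
    exact ((hA.sub (hB.const_mul (1 - b))).sub (hC.const_mul (a - 1))).const_mul g
  have hderivVev : deriv (V a b) =ᶠ[nhds z] D1 :=
    Filter.eventually_of_mem (hopen.mem_nhds hz) (fun w hw => hderivV hw)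
  have hdiff2 : DifferentiableAt ℂ (deriv (V a b)) z :=
    (Filter.EventuallyEq.differentiableAt_iff hderivVev).2 hD2.differentiableAt
  refine ⟨hdiffV, hdiff2, ?_⟩
  have hD2z := hderivVev.deriv_eq.trans hD2.deriv
  rw [hD2z, hderivV hz, hVW z hz]
  -- relations
  have r1 := Pf_rel a b (1 - b) (a - 1) hz
  rw [show (1 - b - 1 : ℂ) = -b by ring] at r1
  have r2 := Pf_rel a b (1 - b) (a - 2) hz
  rw [show (1 - b - 1 : ℂ) = -b by ring] at r2
  have r3 := Pf_rel a b (-b) (a - 1) hz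
  -- star identity in Pf form
  have hstarP : (1 - a) * Pf a b (1 - b) (a - 1) z
      + (a - 1) * (b - 2 - z) * Pf a b (1 - b) (a - 2) z
      + (a - 1) * (a - 2) * z * Pf a b (1 - b) (a - 3) z = 0 := by
    have hs := star_integral a b z hba hz
    simp only [Pf]
    linear_combination (Complex.exp z * (-z) ^ (1 - b)) * hs
  simp only [hWdef, hD1def]
  linear_combination g * hstarP + g * (b - 1) * r1 + g * (2 * (1 - b) * (a - 1)) * r2
    + g * (-(b * (1 - b))) * r3
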